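/- arXiv:2512.02691 — 5 statements merged into one kernel-verified Lean document; each statement's English description precedes it below -/
import Mathlib

section
/- If x ∈ ℤ_{≥0}^d satisfies Ax = b and x_j ≤ u_j for all j ∈ {1,…,d}, then there exists a unique y ∈ ℤ_{≥0}^{d+1} such that the pair (x, y) satisfies the aggregated equation. -/
/-- `Δ`, the largest absolute value of an entry of `A`. -/
def aggDelta (k d : ℕ) (A : Fin k → Fin d → ℤ) : ℤ :=
  ((Finset.univ.sup fun p : Fin k × Fin d => (A p.1 p.2).natAbs : ℕ) : ℤ)

/-- The base `M := Δ·U + max(‖b‖_∞, ‖u‖_∞) + Δ + 2` used in the aggregation. -/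
def aggM (k d : ℕ) (A : Fin k → Fin d → ℤ) (b : Fin k → ℤ) (u : Fin d → ℤ) : ℤ :=
  aggDelta k d A * (∑ j, u j) +
    max ((Finset.univ.sup fun i => (b i).natAbs : ℕ) : ℤ)
        ((Finset.univ.sup fun j => (u j).natAbs : ℕ) : ℤ) +
    aggDelta k d A + 2

/-- The aggregated equation of Jansen–Pirotton–Tutas:
`Σ_{i=1}^k M^{i−1}·Σ_j a_{ij} x_j + Σ_{j=1}^d M^{k+j−1}·(x_j + y_j)
 + M^{k+d}·(Σ_j (x_j + y_j) + y_{d+1})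
 = Σ_{i=1}^k M^{i−1} b_i + Σ_{j=1}^d M^{k+j−1} u_j + M^{k+d}·U`. -/
def AggEq (k d : ℕ) (A : Fin k → Fin d → ℤ) (b : Fin k → ℤ) (u : Fin d → ℤ)
    (x : Fin d → ℤ) (y : Fin (d + 1) → ℤ) : Prop :=
  (∑ i : Fin k, aggM k d A b u ^ (i : ℕ) * ∑ j : Fin d, A i j * x j)
    + (∑ j : Fin d, aggM k d A b u ^ (k + (j : ℕ)) * (x j + y j.castSucc))
    + aggM k d A b u ^ (k + d) *
        ((∑ j : Fin d, (x j + y j.castSucc)) + y (Fin.last d))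
  = (∑ i : Fin k, aggM k d A b u ^ (i : ℕ) * b i)
    + (∑ j : Fin d, aggM k d A b u ^ (k + (j : ℕ)) * u j)
    + aggM k d A b u ^ (k + d) * (∑ j, u j)

/-!
Using `Ax = b` and cancelling `M^k`, the aggregated equation reads
`Σ_j M^j z_j + M^d w = Σ_j M^j u_j + M^d U` with `z_j = x_j + y_j` and `w = Σ_j z_j + y_{d+1}`.
As `0 ≤ u_j < M`, the `u_j` are base-`M` digits. Comparing the two sides digit by digit from the
lowest one, the constraint `Σ_j z_j ≤ w` leaves no room for a carry. So `z = u` and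
`w = U`, that is `y_j = u_j - x_j` and `y_{d+1} = 0`; conversely this `y` satisfies the equation.
-/

open Finset

/-- `c` is the carry into the lowest digit; weighting it by `M` in the inequality is what lets
the inequality pass to the next digit, whose carry `c'` satisfies `M * c' = c + z₀ - u₀`. -/
theorem eq_of_add_sum_pow_mul_eq {M : ℤ} (hM : 2 ≤ M) {d : ℕ} {u z : Fin d → ℤ} {c D : ℤ}
    (huM : ∀ j, u j < M) (hz : ∀ j, 0 ≤ z j) (hc : 0 ≤ c)
    (heq : c + ∑ j : Fin d, M ^ (j : ℕ) * z j = ∑ j : Fin d, M ^ (j : ℕ) * u j + M ^ d * D)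
    (hle : M * c + ∑ j, z j + D ≤ ∑ j, u j) :
    c = 0 ∧ D = 0 ∧ z = u := by
  induction d generalizing c with
  | zero =>
    simp only [univ_eq_empty, sum_empty, pow_zero, one_mul, add_zero, zero_add] at heq hle
    exact ⟨by nlinarith, by nlinarith, Subsingleton.elim _ _⟩
  | succ d ih =>
    have shift (f : Fin (d + 1) → ℤ) :
        ∑ j : Fin (d + 1), M ^ (j : ℕ) * f j = f 0 + M * ∑ j : Fin d, M ^ (j : ℕ) * f j.succ := by
      simp [Fin.sum_univ_succ, mul_sum, pow_succ', mul_assoc]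
    rw [shift, shift, pow_succ'] at heq
    rw [Fin.sum_univ_succ, Fin.sum_univ_succ] at hle
    set c' := ∑ j : Fin d, M ^ (j : ℕ) * u j.succ + M ^ d * D - ∑ j : Fin d, M ^ (j : ℕ) * z j.succ
      with hc'def
    have hc' : M * c' = c + z 0 - u 0 := by linear_combination -heq
    have hc'0 : 0 ≤ c' := by nlinarith [hz 0, huM 0]
    have hcM : c ≤ M * c := by nlinarith
    obtain ⟨hc'z, rfl, htail⟩ := ih (fun j => huM j.succ) (fun j => hz j.succ) hc'0
      (by rw [hc'def]; ring) (by linarith)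
    have htail_sum : ∑ j : Fin d, z j.succ = ∑ j : Fin d, u j.succ := by rw [htail]
    rw [hc'z, mul_zero] at hc'
    have hc0 : c = 0 := by nlinarith
    refine ⟨hc0, rfl, funext fun j => Fin.cases ?_ (congrFun htail) j⟩
    linarith

section

variable {k d : ℕ} (A : Fin k → Fin d → ℤ) (b : Fin k → ℤ) {u : Fin d → ℤ}

theorem sup_natAbs_add_two_le_aggM (hu : ∀ j, 0 ≤ u j) :
    ((univ.sup fun j => (u j).natAbs : ℕ) : ℤ) + 2 ≤ aggM k d A b u := by
  have hΔU : 0 ≤ aggDelta k d A * ∑ j, u j :=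
    mul_nonneg (Int.natCast_nonneg _) (sum_nonneg fun j _ => hu j)
  have hΔ : 0 ≤ aggDelta k d A := Int.natCast_nonneg _
  unfold aggM
  linarith [le_max_right ((univ.sup fun i => (b i).natAbs : ℕ) : ℤ)
    ((univ.sup fun j => (u j).natAbs : ℕ) : ℤ)]

theorem two_le_aggM (hu : ∀ j, 0 ≤ u j) : 2 ≤ aggM k d A b u := by
  linarith [sup_natAbs_add_two_le_aggM A b hu, Int.natCast_nonneg (univ.sup fun j => (u j).natAbs)]

theorem lt_aggM (hu : ∀ j, 0 ≤ u j) (j : Fin d) : u j < aggM k d A b u := by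
  have hj : ((u j).natAbs : ℤ) ≤ ((univ.sup fun j => (u j).natAbs : ℕ) : ℤ) := by
    exact_mod_cast le_sup (f := fun j => (u j).natAbs) (mem_univ j)
  linarith [sup_natAbs_add_two_le_aggM A b hu, Int.le_natAbs (a := u j)]

theorem aggEq_iff {x : Fin d → ℤ} (hM : aggM k d A b u ≠ 0) (hAx : ∀ i, ∑ j, A i j * x j = b i)
    (y : Fin (d + 1) → ℤ) :
    AggEq k d A b u x y ↔
      ∑ j : Fin d, aggM k d A b u ^ (j : ℕ) * (x j + y j.castSucc)
        + aggM k d A b u ^ d * ((∑ j, (x j + y j.castSucc)) + y (Fin.last d))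
      = ∑ j : Fin d, aggM k d A b u ^ (j : ℕ) * u j + aggM k d A b u ^ d * ∑ j, u j := by
  simp_rw [AggEq, hAx, pow_add, mul_assoc, ← mul_sum, add_assoc, add_right_inj, ← mul_add,
    mul_right_inj' (pow_ne_zero _ hM)]

end

theorem aggregation_exists_unique_general (k d : ℕ)
    (A : Fin k → Fin d → ℤ) (b : Fin k → ℤ) (u : Fin d → ℤ)
    (x : Fin d → ℤ) (hx : ∀ j, 0 ≤ x j)
    (hAx : ∀ i, (∑ j, A i j * x j) = b i)
    (hxu : ∀ j, x j ≤ u j) :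
    ∃! y : Fin (d + 1) → ℤ, (∀ j, 0 ≤ y j) ∧ AggEq k d A b u x y := by
  have hu j : 0 ≤ u j := (hx j).trans (hxu j)
  have hM := two_le_aggM A b hu
  refine ⟨Fin.snoc (u - x) 0, ⟨fun j => ?_, ?_⟩, fun y ⟨hy, hagg⟩ => ?_⟩
  · refine Fin.lastCases ?_ (fun j => ?_) j <;> simp [hxu]
  · rw [aggEq_iff A b (by omega) hAx]
    simp
  · rw [aggEq_iff A b (by omega) hAx] at hagg
    obtain ⟨-, hD, hz⟩ := eq_of_add_sum_pow_mul_eq hM (lt_aggM A b hu)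
      (fun j => add_nonneg (hx j) (hy j.castSucc)) le_rfl
      (D := ∑ j, u j - (∑ j, (x j + y j.castSucc) + y (Fin.last d)))
      (by linear_combination hagg) (by linarith [hy (Fin.last d)])
    have hsum : ∑ j, (x j + y j.castSucc) = ∑ j, u j := by rw [hz]
    ext j
    refine Fin.lastCases ?_ (fun j => ?_) j
    · simp only [Fin.snoc_last]; linarith
    · simp only [Fin.snoc_castSucc, Pi.sub_apply]; linarith [congrFun hz j]

/-- If `x ∈ ℤ_{≥0}^d` satisfies `Ax = b` and `x ≤ u`, then there is a
unique `y ∈ ℤ_{≥0}^{d+1}` such that `(x, y)` satisfies the aggregated equation. -/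
theorem aggregation_exists_unique (k d : ℕ)
    (A : Fin k → Fin d → ℤ) (b : Fin k → ℤ) (u : Fin d → ℤ)
    (hu : ∀ j, 0 ≤ u j)
    (x : Fin d → ℤ) (hx : ∀ j, 0 ≤ x j)
    (hAx : ∀ i, (∑ j, A i j * x j) = b i)
    (hxu : ∀ j, x j ≤ u j) :
    ∃! y : Fin (d + 1) → ℤ, (∀ j, 0 ≤ y j) ∧ AggEq k d A b u x y :=
  aggregation_exists_unique_general k d A b u x hx hAx hxu
end

section
/- If x ∈ ℤ_{≥0}^d and y ∈ ℤ_{≥0}^{d+1} satisfy the aggregated equation, then Ax = b and x_j ≤ u_j for all j ∈ {1,…,d}. -/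
/-!
Moving everything to one side, the aggregated equation says that the base-`M` expansion with
digits `(Ax - b)_i`, then `x_j + y_j - u_j`, and leading coefficient `S - U` (where `S` is the
sum of all `x_j` and `y_j`) vanishes. All these digits are at least
`-(Δ S + max(‖b‖_∞, ‖u‖_∞))`, and a vanishing expansion whose digits are bounded below by `-C`
has leading coefficient at most `C / (M - 1)`; the size of `M` turns this into `S ≤ U`. Then
`|(Ax - b)_i| < M`, so these digits vanish, as balanced expansions are unique. The remaining
digits are at least `2 - M` and, together with the leading coefficient, have nonpositive sum.
By the same bound the leading coefficient is `≤ 0`, so this condition survives absorbing the top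
digit into the leading coefficient, and induction on the length shows that everything vanishes.
-/

open Finset

def digitsVal {n : ℕ} (M : ℤ) (t : Fin n → ℤ) (f : ℤ) : ℤ :=
  ∑ i : Fin n, M ^ (i : ℕ) * t i + M ^ n * f

section digitsVal

variable {M f : ℤ}

@[simp]
lemma digitsVal_zero (t : Fin 0 → ℤ) : digitsVal M t f = f := by
  simp [digitsVal]

lemma digitsVal_succ {n : ℕ} (t : Fin (n + 1) → ℤ) :
    digitsVal M t f = digitsVal M (fun i => t i.castSucc) (t (Fin.last n) + M * f) := by
  simp only [digitsVal, Fin.sum_univ_castSucc, Fin.val_castSucc, Fin.val_last]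
  ring

lemma digitsVal_append {m n : ℕ} (s : Fin m → ℤ) (t : Fin n → ℤ) :
    digitsVal M (Fin.append s t) f = digitsVal M s (digitsVal M t f) := by
  simp only [digitsVal, Fin.sum_univ_add, Fin.append_left, Fin.append_right, Fin.val_castAdd,
    Fin.val_natAdd, pow_add, mul_add, mul_sum]
  ring_nf

lemma mul_sub_one_le_of_digitsVal_eq_zero {n : ℕ} {t : Fin n → ℤ} {C : ℤ} (hM : 1 ≤ M)
    (hC : 0 ≤ C) (ht : ∀ i, -C ≤ t i) (h : digitsVal M t f = 0) : f * (M - 1) ≤ C := by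
  induction n generalizing f with
  | zero => simp_all
  | succ n ih =>
    rw [digitsVal_succ] at h
    have htop := ih (fun i => ht _) h
    have hlast := ht (Fin.last n)
    nlinarith

lemma digits_eq_zero_of_abs_lt {n : ℕ} {t : Fin n → ℤ} (ht : ∀ i, |t i| < M)
    (h : digitsVal M t f = 0) : t = 0 ∧ f = 0 := by
  induction n generalizing f with
  | zero => exact ⟨Subsingleton.elim _ _, by simpa using h⟩
  | succ n ih =>
    rw [digitsVal_succ] at h
    obtain ⟨hinit, htop⟩ := ih (fun i => ht _) h
    have hM : 0 < M := (abs_nonneg _).trans_lt (ht (Fin.last n))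
    have hlast : t (Fin.last n) = 0 :=
      Int.eq_zero_of_abs_lt_dvd ⟨-f, by linarith⟩ (ht (Fin.last n))
    refine ⟨funext fun i => Fin.lastCases hlast (congrFun hinit) i, ?_⟩
    nlinarith

lemma digits_eq_zero_of_sum_add_nonpos {n : ℕ} {t : Fin n → ℤ} (hM : 2 ≤ M)
    (ht : ∀ i, 2 - M ≤ t i) (hsum : ∑ i, t i + f ≤ 0) (h : digitsVal M t f = 0) :
    t = 0 ∧ f = 0 := by
  induction n generalizing f with
  | zero => exact ⟨Subsingleton.elim _ _, by simpa using h⟩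
  | succ n ih =>
    have hf : f ≤ 0 := by
      have := mul_sub_one_le_of_digitsVal_eq_zero (C := M - 2) (by linarith) (by linarith)
        (fun i => by linarith [ht i]) h
      nlinarith
    rw [digitsVal_succ] at h
    rw [Fin.sum_univ_castSucc] at hsum
    obtain ⟨hinit, htop⟩ := ih (fun i => ht _) (by nlinarith) h
    have hinit' : ∀ i : Fin n, t i.castSucc = 0 := fun i => congrFun hinit i
    simp only [hinit', sum_const_zero, zero_add] at hsum
    have hf0 : f = 0 := by nlinarith
    have hlast : t (Fin.last n) = 0 := by simpa [hf0] using htop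
    exact ⟨funext fun i => Fin.lastCases hlast hinit' i, hf0⟩

end digitsVal

def aggMaxNorm (k d : ℕ) (b : Fin k → ℤ) (u : Fin d → ℤ) : ℤ :=
  max ((univ.sup fun i => (b i).natAbs : ℕ) : ℤ)
    ((univ.sup fun j => (u j).natAbs : ℕ) : ℤ)

lemma abs_le_sup_natAbs {ι : Type*} [Fintype ι] (g : ι → ℤ) (i : ι) :
    |g i| ≤ ((univ.sup fun i => (g i).natAbs : ℕ) : ℤ) := by
  rw [Int.abs_eq_natAbs]
  exact_mod_cast le_sup (f := fun i => (g i).natAbs) (mem_univ i)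

lemma abs_le_aggMaxNorm {k d : ℕ} (b : Fin k → ℤ) (u : Fin d → ℤ) (i : Fin k) :
    |b i| ≤ aggMaxNorm k d b u :=
  (abs_le_sup_natAbs b i).trans (le_max_left _ _)

lemma le_aggMaxNorm {k d : ℕ} (b : Fin k → ℤ) (u : Fin d → ℤ) (j : Fin d) :
    u j ≤ aggMaxNorm k d b u :=
  (le_abs_self _).trans ((abs_le_sup_natAbs u j).trans (le_max_right _ _))

section aggregation

variable {k d : ℕ} {A : Fin k → Fin d → ℤ} {b : Fin k → ℤ} {u : Fin d → ℤ}

lemma aggM_eq :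
    aggM k d A b u = aggDelta k d A * ∑ j, u j + aggMaxNorm k d b u + aggDelta k d A + 2 :=
  rfl

lemma aggDelta_nonneg : 0 ≤ aggDelta k d A := Int.natCast_nonneg _

lemma aggMaxNorm_nonneg : 0 ≤ aggMaxNorm k d b u :=
  (Int.natCast_nonneg _).trans (le_max_left _ _)

lemma abs_sum_mul_sub_le {x : Fin d → ℤ} (hx : ∀ j, 0 ≤ x j) (i : Fin k) :
    |∑ j, A i j * x j - b i| ≤ aggDelta k d A * ∑ j, x j + aggMaxNorm k d b u := by
  have hA : |∑ j, A i j * x j| ≤ aggDelta k d A * ∑ j, x j := by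
    rw [mul_sum]
    refine (abs_sum_le_sum_abs _ _).trans (sum_le_sum fun j _ => ?_)
    rw [abs_mul, abs_of_nonneg (hx j)]
    exact mul_le_mul_of_nonneg_right
      (abs_le_sup_natAbs (fun p : Fin k × Fin d => A p.1 p.2) (i, j)) (hx j)
  linarith [abs_sub (∑ j, A i j * x j) (b i), abs_le_aggMaxNorm b u i]

lemma AggEq.digitsVal_eq_zero {x : Fin d → ℤ} {y : Fin (d + 1) → ℤ}
    (h : AggEq k d A b u x y) :
    digitsVal (aggM k d A b u) (fun i => ∑ j, A i j * x j - b i)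
      (digitsVal (aggM k d A b u) (fun j => x j + y j.castSucc - u j)
        (∑ j, (x j + y j.castSucc) + y (Fin.last d) - ∑ j, u j)) = 0 := by
  unfold AggEq at h
  simp only [digitsVal, mul_sub, mul_add, sum_sub_distrib, sum_add_distrib, mul_sum, pow_add,
    mul_assoc] at h ⊢
  linear_combination h

end aggregation

lemma aggregated_digits_eq_zero {k d : ℕ} {c : Fin k → ℤ} {e : Fin d → ℤ}
    {M Δ B U S : ℤ} (hΔ : 0 ≤ Δ) (hB : 0 ≤ B) (hU : 0 ≤ U) (hS : 0 ≤ S)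
    (hM : M = Δ * U + B + Δ + 2)
    (hc : ∀ i, |c i| ≤ Δ * S + B) (he : ∀ j, -B ≤ e j) (hsum : ∑ j, e j ≤ S - U)
    (h : digitsVal M c (digitsVal M e (S - U)) = 0) : c = 0 ∧ e = 0 := by
  have hΔU : 0 ≤ Δ * U := mul_nonneg hΔ hU
  have hΔS : 0 ≤ Δ * S := mul_nonneg hΔ hS
  have hSU : S ≤ U := by
    have hdigits : ∀ i, -(Δ * S + B) ≤ Fin.append c e i := Fin.addCases
      (fun i => by rw [Fin.append_left]; exact neg_le_of_abs_le (hc i))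
      (fun j => by rw [Fin.append_right]; linarith [he j])
    have key := mul_sub_one_le_of_digitsVal_eq_zero (M := M) (by linarith) (by linarith) hdigits
      (by rwa [digitsVal_append])
    -- `S > U` would make the left side at least `M - 1 > Δ * S + B`
    by_contra! hlt
    nlinarith [mul_nonneg (sub_nonneg.2 hlt) hΔ]
  obtain ⟨hc0, hR⟩ := digits_eq_zero_of_abs_lt (fun i => (hc i).trans_lt (by nlinarith)) h
  exact ⟨hc0, (digits_eq_zero_of_sum_add_nonpos (by linarith) (fun j => by linarith [he j])
    (by linarith) hR).1⟩

/-- If `x ∈ ℤ_{≥0}^d` and `y ∈ ℤ_{≥0}^{d+1}` satisfy the aggregated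
equation, then `Ax = b` and `x_j ≤ u_j` for all `j`. -/
theorem aggregation_sound (k d : ℕ)
    (A : Fin k → Fin d → ℤ) (b : Fin k → ℤ) (u : Fin d → ℤ)
    (hu : ∀ j, 0 ≤ u j)
    (x : Fin d → ℤ) (y : Fin (d + 1) → ℤ)
    (hx : ∀ j, 0 ≤ x j) (hy : ∀ j, 0 ≤ y j)
    (hagg : AggEq k d A b u x y) :
    (∀ i, (∑ j, A i j * x j) = b i) ∧ (∀ j, x j ≤ u j) := by
  set S := ∑ j, (x j + y j.castSucc) + y (Fin.last d)
  have hxS : ∑ j, x j ≤ S :=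
    (sum_le_sum fun j _ => le_add_of_nonneg_right (hy _)).trans (le_add_of_nonneg_right (hy _))
  have hsum : ∑ j, (x j + y j.castSucc - u j) ≤ S - ∑ j, u j := by
    rw [sum_sub_distrib]
    linarith [hy (Fin.last d)]
  obtain ⟨hc, he⟩ := aggregated_digits_eq_zero aggDelta_nonneg aggMaxNorm_nonneg
    (sum_nonneg fun j _ => hu j) ((sum_nonneg fun j _ => hx j).trans hxS) aggM_eq
    (fun i => (abs_sum_mul_sub_le hx i).trans (by gcongr; exact aggDelta_nonneg))
    (fun j => by linarith [hx j, hy j.castSucc, le_aggMaxNorm b u j]) hsum hagg.digitsVal_eq_zero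
  refine ⟨fun i => sub_eq_zero.1 (congrFun hc i), fun j => ?_⟩
  have hej : x j + y j.castSucc - u j = 0 := congrFun he j
  linarith [hy j.castSucc]
end

section
/- Let n ≥ 2 be a power of two and write log n for log₂ n. Let a well-structured 3-CNF formula with n variables and m ≥ 1 clauses, an integer γ > 3, and its encoding Z be given. Fix i ∈ {0,…,n−1} and let x_1^bin,…,x_{log n}^bin ∈ {0,1} be the binary digits of i with x_1^bin most significant, i.e. i = Σ_{ℓ=1}^{log n} 2^{log n − ℓ}·x_ℓ^bin. Suppose nonnegative integers z_0,…,z_{log n}, q_0,…,q_{log n − 1}, r_0,…,r_{log n − 1} satisfy: z_0 = Z; z_j = q_j·(γ^m)^{3n/2^{j+1}} + r_j and r_j ≤ (γ^m)^{3n/2^{j+1}} − 1 for all j ∈ {0,…,log n − 1}; and z_{j+1} = q_j·x_{j+1}^bin + r_j·(1 − x_{j+1}^bin) for all j ∈ {0,…,log n − 1}. Then all these values are uniquely determined by i and Z, and z_{log n} = C_pos1^(i) + C_pos2^(i)·γ^m + C_neg^(i)·(γ^m)^2. -/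
/-- A 3-CNF formula: a list of clauses, each a list of at most three literals.
A literal is a pair `(i, pol)` where `i` is a variable index (below `numVars`)
and `pol = true` means the positive literal `v i`, `pol = false` its negation. -/
structure Cnf3 where
  numVars : ℕ
  clauses : List (List (ℕ × Bool))
  clause_len : ∀ C ∈ clauses, C.length ≤ 3
  vars_lt : ∀ C ∈ clauses, ∀ l ∈ C, l.1 < numVars

namespace Cnf3

/-- The number of clauses. -/
def numClauses (φ : Cnf3) : ℕ := φ.clauses.length

/-- A literal evaluates to true under assignment `a`. -/
def LitSat (a : ℕ → Bool) (l : ℕ × Bool) : Prop :=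
  (if l.2 then a l.1 else !a l.1) = true

/-- The formula is satisfiable: some assignment makes every clause contain a true literal. -/
def Satisfiable (φ : Cnf3) : Prop :=
  ∃ a : ℕ → Bool, ∀ C ∈ φ.clauses, ∃ l ∈ C, LitSat a l

/-- The number of occurrences (with multiplicity over all clauses) of variable `i`
with polarity `pos`. -/
def occCount (φ : Cnf3) (i : ℕ) (pos : Bool) : ℕ :=
  (φ.clauses.map fun C => C.countP fun l => l.1 == i && l.2 == pos).sum

/-- A formula is well-structured if every variable occurs, counted with multiplicity,
exactly twice positively and exactly once negatively. -/
def WellStructured (φ : Cnf3) : Prop :=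
  ∀ i < φ.numVars, φ.occCount i true = 2 ∧ φ.occCount i false = 1

/-- The number of occurrences of variable `i` with polarity `pos` inside the `c`-th clause. -/
def clauseOcc (φ : Cnf3) (c i : ℕ) (pos : Bool) : ℕ :=
  (φ.clauses.getD c []).countP fun l => l.1 == i && l.2 == pos

end Cnf3

/-!
Read `Z` in base `C = (γ ^ m) ^ 3`: it is the number with the `2 ^ L` digits
`w t = γ ^ jIdx t + γ ^ kIdx t * γ ^ m + γ ^ lIdx t * (γ ^ m) ^ 2 < C`, and the divisor of round
`j` is `C ^ 2 ^ (L - (j + 1))`. So round `j` cuts the current window of `2 ^ (L - j)` digits into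
its upper half (the quotient) and lower half (the remainder), and the bit `x (j + 1)` keeps the
half that contains digit `i`. After `L` rounds the window is the single digit `w i`. Uniqueness of
Euclidean division forces every round.
-/

open Finset

lemma sum_range_pow_mul_lt_pow {C M : ℕ} {f : ℕ → ℕ} (hf : ∀ t < M, f t < C) :
    ∑ t ∈ range M, C ^ t * f t < C ^ M := by
  induction M with
  | zero => simp
  | succ M ih =>
    have hlow := ih fun t ht => hf t (by omega)
    have htop : f M + 1 ≤ C := hf M (by omega)
    calc ∑ t ∈ range (M + 1), C ^ t * f t
        < C ^ M + C ^ M * f M := by rw [sum_range_succ]; omega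
      _ = C ^ M * (f M + 1) := by ring
      _ ≤ C ^ M * C := Nat.mul_le_mul_left _ htop
      _ = C ^ (M + 1) := (pow_succ C M).symm

lemma sum_range_add_self_pow_mul (C M : ℕ) (f : ℕ → ℕ) :
    ∑ t ∈ range (M + M), C ^ t * f t
      = (∑ t ∈ range M, C ^ t * f (M + t)) * C ^ M + ∑ t ∈ range M, C ^ t * f t := by
  rw [sum_range_add, add_comm, sum_mul]
  congr 1
  refine sum_congr rfl fun t _ => ?_
  ring

lemma add_mul_add_mul_sq_lt_pow_three {a b c B : ℕ} (ha : a < B) (hb : b < B) (hc : c < B) :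
    a + b * B + c * B ^ 2 < B ^ 3 := by
  have hb' : (b + 1) * B ≤ B * B := Nat.mul_le_mul_right B hb
  have hc' : (c + 1) * B ^ 2 ≤ B * B ^ 2 := Nat.mul_le_mul_right _ hc
  nlinarith

def binaryPrefix (L : ℕ) (x : ℕ → ℕ) (j : ℕ) : ℕ :=
  ∑ ℓ ∈ Icc 1 j, 2 ^ (L - ℓ) * x ℓ

@[simp]
lemma binaryPrefix_zero (L : ℕ) (x : ℕ → ℕ) : binaryPrefix L x 0 = 0 := rfl

lemma binaryPrefix_succ (L : ℕ) (x : ℕ → ℕ) (j : ℕ) :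
    binaryPrefix L x (j + 1) = binaryPrefix L x j + 2 ^ (L - (j + 1)) * x (j + 1) :=
  sum_Icc_succ_top (by omega) _

lemma binaryPrefix_add_two_pow_le {L : ℕ} {x : ℕ → ℕ} (hx : ∀ ℓ, 1 ≤ ℓ → ℓ ≤ L → x ℓ ≤ 1) :
    ∀ j ≤ L, binaryPrefix L x j + 2 ^ (L - j) ≤ 2 ^ L := by
  intro j
  induction j with
  | zero => simp
  | succ j ih =>
    intro hj
    have hxj : 2 ^ (L - (j + 1)) * x (j + 1) ≤ 2 ^ (L - (j + 1)) :=
      mul_le_of_le_one_right' (hx _ (by omega) hj)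
    have hpow : 2 ^ (L - j) = 2 ^ (L - (j + 1)) + 2 ^ (L - (j + 1)) := by
      rw [← two_mul, ← pow_succ']; congr 1; omega
    have := ih (by omega)
    rw [binaryPrefix_succ]
    omega

structure IsDivisionChain (D x : ℕ → ℕ) (L Z : ℕ) (z q r : ℕ → ℕ) : Prop where
  start : z 0 = Z
  div : ∀ j < L, z j = q j * D j + r j
  rem_lt : ∀ j < L, r j < D j
  select : ∀ j < L, z (j + 1) = q j * x (j + 1) + r j * (1 - x (j + 1))

namespace IsDivisionChain

variable {D x : ℕ → ℕ} {L Z : ℕ} {z q r : ℕ → ℕ}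

lemma quot_rem_eq (h : IsDivisionChain D x L Z z q r) {j Q R : ℕ} (hj : j < L)
    (hQR : z j = Q * D j + R) (hR : R < D j) : q j = Q ∧ r j = R := by
  have hdivmod : ∀ Q R, z j = Q * D j + R → R < D j → z j / D j = Q ∧ z j % D j = R :=
    fun Q R hz hR => (Nat.div_mod_unique (by omega)).2 ⟨by rw [hz]; ring, hR⟩
  obtain ⟨hq, hr⟩ := hdivmod _ _ (h.div j hj) (h.rem_lt j hj)
  obtain ⟨hQ, hR⟩ := hdivmod _ _ hQR hR
  exact ⟨hq.symm.trans hQ, hr.symm.trans hR⟩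

lemma unique {z' q' r' : ℕ → ℕ} (h' : IsDivisionChain D x L Z z' q' r')
    (h : IsDivisionChain D x L Z z q r) :
    (∀ j ≤ L, z' j = z j) ∧ (∀ j < L, q' j = q j ∧ r' j = r j) := by
  have hqr : ∀ j < L, z' j = z j → q' j = q j ∧ r' j = r j := fun j hj hz =>
    h'.quot_rem_eq hj (hz ▸ h.div j hj) (h.rem_lt j hj)
  have hz : ∀ j ≤ L, z' j = z j := by
    intro j
    induction j with
    | zero => exact fun _ => h'.start.trans h.start.symm
    | succ j ih =>
      intro hj
      obtain ⟨hq, hr⟩ := hqr j hj (ih (by omega))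
      rw [h'.select j hj, h.select j hj, hq, hr]
  exact ⟨hz, fun j hj => hqr j hj (hz j hj.le)⟩

lemma eq_sum_window {C : ℕ} {w : ℕ → ℕ}
    (h : IsDivisionChain D x L (∑ t ∈ range (2 ^ L), C ^ t * w t) z q r)
    (hD : ∀ j < L, D j = C ^ 2 ^ (L - (j + 1))) (hw : ∀ t < 2 ^ L, w t < C)
    (hx : ∀ ℓ, 1 ≤ ℓ → ℓ ≤ L → x ℓ ≤ 1) :
    ∀ j ≤ L, z j = ∑ t ∈ range (2 ^ (L - j)), C ^ t * w (binaryPrefix L x j + t) := by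
  intro j
  induction j with
  | zero => simpa using h.start
  | succ j ih =>
    intro hj
    set s := binaryPrefix L x j
    set M := 2 ^ (L - (j + 1))
    have hM : 2 ^ (L - j) = M + M := by
      rw [← two_mul, ← pow_succ']; congr 1; omega
    have hs : s + (M + M) ≤ 2 ^ L := hM ▸ binaryPrefix_add_two_pow_le hx j (by omega)
    obtain ⟨hq, hr⟩ := h.quot_rem_eq hj
      (by rw [ih (by omega), hM, sum_range_add_self_pow_mul, hD j hj])
      (hD j hj ▸ sum_range_pow_mul_lt_pow fun t ht => hw _ (by omega))
    rw [h.select j hj, hq, hr, binaryPrefix_succ]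
    rcases Nat.le_one_iff_eq_zero_or_eq_one.1 (hx (j + 1) (by omega) hj) with hbit | hbit <;>
      simp [hbit, s, M, add_assoc]

lemma last_eq {C : ℕ} {w : ℕ → ℕ}
    (h : IsDivisionChain D x L (∑ t ∈ range (2 ^ L), C ^ t * w t) z q r)
    (hD : ∀ j < L, D j = C ^ 2 ^ (L - (j + 1))) (hw : ∀ t < 2 ^ L, w t < C)
    (hx : ∀ ℓ, 1 ≤ ℓ → ℓ ≤ L → x ℓ ≤ 1) :
    z L = w (binaryPrefix L x L) := by
  simpa using h.eq_sum_window hD hw hx L le_rfl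

end IsDivisionChain

theorem block_extraction_general (L n m γ : ℕ) (jIdx kIdx lIdx : ℕ → ℕ)
    (hL : n = 2 ^ L) (hγ : 3 < γ)
    (hidx : ∀ i < n, jIdx i < m ∧ kIdx i < m ∧ lIdx i < m)
    (Z : ℕ)
    (hZ : Z = ∑ i ∈ Finset.range n,
      ((γ ^ m) ^ (3 * i) * γ ^ jIdx i
        + (γ ^ m) ^ (3 * i + 1) * γ ^ kIdx i
        + (γ ^ m) ^ (3 * i + 2) * γ ^ lIdx i))
    (i : ℕ)
    (xbin : ℕ → ℕ) (hxbin : ∀ ℓ, 1 ≤ ℓ → ℓ ≤ L → xbin ℓ ≤ 1)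
    (hibin : i = ∑ ℓ ∈ Finset.Icc 1 L, 2 ^ (L - ℓ) * xbin ℓ)
    (z q r : ℕ → ℕ)
    (hz0 : z 0 = Z)
    (hdiv : ∀ j < L, z j = q j * (γ ^ m) ^ (3 * n / 2 ^ (j + 1)) + r j)
    (hrem : ∀ j < L, r j ≤ (γ ^ m) ^ (3 * n / 2 ^ (j + 1)) - 1)
    (hsel : ∀ j < L, z (j + 1) = q j * xbin (j + 1) + r j * (1 - xbin (j + 1))) :
    (∀ z' q' r' : ℕ → ℕ,
        z' 0 = Z →
        (∀ j < L, z' j = q' j * (γ ^ m) ^ (3 * n / 2 ^ (j + 1)) + r' j) →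
        (∀ j < L, r' j ≤ (γ ^ m) ^ (3 * n / 2 ^ (j + 1)) - 1) →
        (∀ j < L, z' (j + 1) = q' j * xbin (j + 1) + r' j * (1 - xbin (j + 1))) →
        (∀ j ≤ L, z' j = z j) ∧ (∀ j < L, q' j = q j ∧ r' j = r j)) ∧
    z L = γ ^ jIdx i + γ ^ kIdx i * γ ^ m + γ ^ lIdx i * (γ ^ m) ^ 2 := by
  set D : ℕ → ℕ := fun j => (γ ^ m) ^ (3 * n / 2 ^ (j + 1))
  have chain_of : ∀ z q r : ℕ → ℕ, z 0 = Z → (∀ j < L, z j = q j * D j + r j) →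
      (∀ j < L, r j ≤ D j - 1) →
      (∀ j < L, z (j + 1) = q j * xbin (j + 1) + r j * (1 - xbin (j + 1))) →
      IsDivisionChain D xbin L Z z q r := by
    refine fun z q r h0 h1 h2 h3 => ⟨h0, h1, fun j hj => ?_, h3⟩
    have : 0 < D j := by positivity
    have := h2 j hj
    omega
  have hchain := chain_of z q r hz0 hdiv hrem hsel
  refine ⟨fun z' q' r' h0 h1 h2 h3 => (chain_of z' q' r' h0 h1 h2 h3).unique hchain, ?_⟩
  have hD : ∀ j < L, D j = ((γ ^ m) ^ 3) ^ 2 ^ (L - (j + 1)) := fun j hj => by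
    have hn : n = 2 ^ (L - (j + 1)) * 2 ^ (j + 1) := by rw [hL, ← pow_add]; congr 1; omega
    simp only [D]
    rw [hn, ← mul_assoc, Nat.mul_div_cancel _ (by positivity), pow_mul]
  have hw : ∀ t < 2 ^ L, γ ^ jIdx t + γ ^ kIdx t * γ ^ m + γ ^ lIdx t * (γ ^ m) ^ 2 < (γ ^ m) ^ 3 :=
    fun t ht => by
      obtain ⟨hj, hk, hl⟩ := hidx t (hL ▸ ht)
      have hmono : ∀ {e}, e < m → γ ^ e < γ ^ m := Nat.pow_lt_pow_right (by omega)
      exact add_mul_add_mul_sq_lt_pow_three (hmono hj) (hmono hk) (hmono hl)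
  have hZ' : Z = ∑ t ∈ range (2 ^ L), ((γ ^ m) ^ 3) ^ t *
      (γ ^ jIdx t + γ ^ kIdx t * γ ^ m + γ ^ lIdx t * (γ ^ m) ^ 2) := by
    rw [hZ, hL]
    exact sum_congr rfl fun t _ => by ring
  rw [hZ'] at hchain
  rw [hchain.last_eq hD hw hxbin, hibin]
  rfl

/-- Decoding the `i`-th block from the encoding `Z` by iterated
Euclidean division along the binary representation of `i`: all intermediate values
are uniquely determined by `i` and `Z`, and the final value `z_{log n}` equals
`C_pos1^(i) + C_pos2^(i)·γ^m + C_neg^(i)·(γ^m)^2`. -/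
theorem block_extraction (L n m γ : ℕ) (φ : Cnf3) (jIdx kIdx lIdx : ℕ → ℕ)
    (hL : n = 2 ^ L) (hn : 2 ≤ n) (hm : 1 ≤ m) (hγ : 3 < γ)
    (hφn : φ.numVars = n) (hφm : φ.numClauses = m)
    (hws : φ.WellStructured)
    (hidx : ∀ i < n, jIdx i < m ∧ kIdx i < m ∧ lIdx i < m)
    (hocc : ∀ i < n,
      (∀ c, φ.clauseOcc c i true =
        (if jIdx i = c then 1 else 0) + (if kIdx i = c then 1 else 0)) ∧
      (∀ c, φ.clauseOcc c i false = (if lIdx i = c then 1 else 0)))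
    (Z : ℕ)
    (hZ : Z = ∑ i ∈ Finset.range n,
      ((γ ^ m) ^ (3 * i) * γ ^ jIdx i
        + (γ ^ m) ^ (3 * i + 1) * γ ^ kIdx i
        + (γ ^ m) ^ (3 * i + 2) * γ ^ lIdx i))
    (i : ℕ) (hi : i < n)
    (xbin : ℕ → ℕ) (hxbin : ∀ ℓ, 1 ≤ ℓ → ℓ ≤ L → xbin ℓ ≤ 1)
    (hibin : i = ∑ ℓ ∈ Finset.Icc 1 L, 2 ^ (L - ℓ) * xbin ℓ)
    (z q r : ℕ → ℕ)
    (hz0 : z 0 = Z)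
    (hdiv : ∀ j < L, z j = q j * (γ ^ m) ^ (3 * n / 2 ^ (j + 1)) + r j)
    (hrem : ∀ j < L, r j ≤ (γ ^ m) ^ (3 * n / 2 ^ (j + 1)) - 1)
    (hsel : ∀ j < L, z (j + 1) = q j * xbin (j + 1) + r j * (1 - xbin (j + 1))) :
    (∀ z' q' r' : ℕ → ℕ,
        z' 0 = Z →
        (∀ j < L, z' j = q' j * (γ ^ m) ^ (3 * n / 2 ^ (j + 1)) + r' j) →
        (∀ j < L, r' j ≤ (γ ^ m) ^ (3 * n / 2 ^ (j + 1)) - 1) →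
        (∀ j < L, z' (j + 1) = q' j * xbin (j + 1) + r' j * (1 - xbin (j + 1))) →
        (∀ j ≤ L, z' j = z j) ∧ (∀ j < L, q' j = q j ∧ r' j = r j)) ∧
    z L = γ ^ jIdx i + γ ^ kIdx i * γ ^ m + γ ^ lIdx i * (γ ^ m) ^ 2 :=
  block_extraction_general L n m γ jIdx kIdx lIdx hL hγ hidx Z hZ i xbin hxbin hibin z q r hz0 hdiv
    hrem hsel
end

section
/- Let a well-structured 3-CNF formula with n ≥ 1 variables and m ≥ 1 clauses be given and let γ be an integer with γ > 4n. Then the formula is satisfiable if and only if there exist nonnegative integers λ_1^(i), λ_2^(i), λ_3^(i), λ_4^(i), λ_5^(i) for i ∈ {0,…,n−1} such that Σ_{i=0}^{n−1} Σ_{k=1}^{5} λ_k^(i) ≤ 2n and the following three equations hold: (1) Σ_{i=0}^{n−1} (λ_1^(i)·γ^{j_i} + λ_2^(i)·γ^{k_i} + λ_3^(i)·γ^{ℓ_i}) = Σ_{j=0}^{m−1} γ^j; (2) Σ_{i=0}^{n−1} (λ_1^(i) + λ_2^(i) + 2·λ_3^(i) + λ_4^(i))·γ^i = Σ_{i=0}^{n−1}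 2·γ^i; (3) Σ_{i=0}^{n−1} (λ_4^(i) + λ_5^(i)) = 2n − m (as integers). -/
/-!
Each variable `vᵢ` has three occurrence slots, two positive ones in the clauses `jᵢ`, `kᵢ` and a
negative one in `ℓᵢ`; `λ₁⁽ⁱ⁾, λ₂⁽ⁱ⁾, λ₃⁽ⁱ⁾` are weights on them. Since all the relevant digit
sums are at most `4n < γ`, no carries occur, so equation (1) says that every clause receives total
weight exactly one, and equation (2) that no variable carries weight on a negative and a positive
slot at once. Such a weighting is the same as a choice of one true literal per clause under a
satisfying assignment.
-/

open Finset

theorem Nat.eq_of_sum_mul_pow_eq {b N : ℕ} (hb : 1 < b) {u v : Fin N → ℕ}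
    (hu : ∀ i, u i < b) (hv : ∀ i, v i < b)
    (h : ∑ i, u i * b ^ (i : ℕ) = ∑ i, v i * b ^ (i : ℕ)) : u = v := by
  refine funext <| congrFun <| List.ofFn_inj.mp <|
    Nat.ofDigits_inj_of_len_eq hb (by simp) (by simpa using hu) (by simpa using hv) ?_
  simpa only [Nat.ofDigits_eq_sum_mapIdx, List.mapIdx_eq_ofFn, List.get_ofFn, List.length_ofFn,
    Fin.val_cast, List.sum_ofFn, Fin.cast_cast, Fin.cast_eq_self] using h

theorem Finset.sum_mul_pow_eq_sum_range_fiber {ι R : Type*} [CommSemiring R] {s : Finset ι}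
    {e : ι → ℕ} {m : ℕ} (he : ∀ x ∈ s, e x < m) (w : ι → R) (γ : R) :
    ∑ x ∈ s, w x * γ ^ e x = ∑ c ∈ range m, (∑ x ∈ s with e x = c, w x) * γ ^ c := by
  rw [← sum_fiberwise_of_maps_to (t := range m) fun x hx => mem_range.2 (he x hx)]
  refine sum_congr rfl fun c _ => ?_
  rw [sum_mul]
  exact sum_congr rfl fun x hx => by rw [(mem_filter.1 hx).2]

theorem Cnf3.litSat_iff {a : ℕ → Bool} {l : ℕ × Bool} : Cnf3.LitSat a l ↔ a l.1 = l.2 := by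
  cases h : l.2 <;> simp [Cnf3.LitSat, h]

theorem Cnf3.mem_getD_iff_clauseOcc_pos {φ : Cnf3} {c i : ℕ} {p : Bool} :
    (i, p) ∈ φ.clauses.getD c [] ↔ 0 < φ.clauseOcc c i p := by
  simp [Cnf3.clauseOcc, List.countP_pos_iff]

section Slots

variable {n m : ℕ} (j k l : ℕ → ℕ)

/-- Variable `i` has three occurrence slots: `0` and `1` in the clauses `j i`, `k i` holding
its positive occurrences, `2` in the clause `l i` holding its negative one. -/
def slotClause (x : Fin n × Fin 3) : ℕ := ![j x.1, k x.1, l x.1] x.2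

def slotPolarity : Fin 3 → Bool := ![true, true, false]

theorem sum_slots_mul_pow (w : Fin n × Fin 3 → ℕ) (γ : ℕ) :
    ∑ x, w x * γ ^ slotClause j k l x
      = ∑ i, (w (i, 0) * γ ^ j i + w (i, 1) * γ ^ k i + w (i, 2) * γ ^ l i) := by
  simp [Fintype.sum_prod_type, Fin.sum_univ_three, slotClause, add_assoc]

variable {j k l}

theorem mem_getD_iff_exists_slot {φ : Cnf3} {i : Fin n} {c : ℕ} {p : Bool}
    (hocc : (∀ c, φ.clauseOcc c i true = (if j i = c then 1 else 0) + (if k i = c then 1 else 0))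
      ∧ ∀ c, φ.clauseOcc c i false = if l i = c then 1 else 0) :
    ((i : ℕ), p) ∈ φ.clauses.getD c [] ↔
      ∃ s, slotClause j k l (i, s) = c ∧ slotPolarity s = p := by
  rw [Cnf3.mem_getD_iff_clauseOcc_pos]
  cases p <;> simp [hocc.1, hocc.2, Fin.exists_fin_succ, slotClause, slotPolarity,
    pos_iff_ne_zero, or_iff_not_imp_left]

theorem satisfiable_iff_exists_slot_assignment {φ : Cnf3} (hφn : φ.numVars = n)
    (hφm : φ.numClauses = m)
    (hocc : ∀ i < n,
      (∀ c, φ.clauseOcc c i true = (if j i = c then 1 else 0) + (if k i = c then 1 else 0)) ∧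
      (∀ c, φ.clauseOcc c i false = (if l i = c then 1 else 0))) :
    φ.Satisfiable ↔
      ∃ a : Fin n → Bool, ∀ c < m, ∃ x, slotClause j k l x = c ∧ a x.1 = slotPolarity x.2 := by
  have hlen : φ.clauses.length = m := hφm
  constructor
  · rintro ⟨a, ha⟩
    refine ⟨fun i => a i, fun c hc => ?_⟩
    have hc' : c < φ.clauses.length := hlen ▸ hc
    obtain ⟨⟨v, p⟩, hmem, hsat⟩ := ha _ (List.getElem_mem hc')
    have hv : v < n := hφn ▸ φ.vars_lt _ (List.getElem_mem hc') _ hmem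
    rw [← List.getD_eq_getElem _ [] hc'] at hmem
    obtain ⟨s, hs, rfl⟩ := (mem_getD_iff_exists_slot (i := ⟨v, hv⟩) (hocc v hv)).1 hmem
    exact ⟨(⟨v, hv⟩, s), hs, Cnf3.litSat_iff.1 hsat⟩
  · rintro ⟨a, ha⟩
    refine ⟨fun v => if h : v < n then a ⟨v, h⟩ else false, fun C hC => ?_⟩
    obtain ⟨c, hc, rfl⟩ := List.mem_iff_getElem.1 hC
    obtain ⟨x, hx, hax⟩ := ha c (hlen ▸ hc)
    refine ⟨(x.1, slotPolarity x.2), ?_, Cnf3.litSat_iff.2 (by simp [hax])⟩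
    rw [← List.getD_eq_getElem _ [] hc]
    exact (mem_getD_iff_exists_slot (hocc x.1 x.1.2)).2 ⟨x.2, hx, rfl⟩

end Slots

theorem exists_slot_assignment_iff_exists_slot_cover {n m : ℕ} (e : Fin n × Fin 3 → ℕ) :
    (∃ a : Fin n → Bool, ∀ c < m, ∃ x, e x = c ∧ a x.1 = slotPolarity x.2) ↔
      ∃ w : Fin n × Fin 3 → ℕ, (∀ c < m, ∑ x with e x = c, w x = 1) ∧
        ∀ i, w (i, 0) + w (i, 1) + 2 * w (i, 2) ≤ 2 := by
  constructor
  · rintro ⟨a, ha⟩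
    choose sel hsel using ha
    let w x : ℕ := if h : e x < m then if sel (e x) h = x then 1 else 0 else 0
    have hw_fiber : ∀ c (hc : c < m) x, e x = c → w x = if sel c hc = x then 1 else 0 := by
      rintro c hc x rfl
      simp [w, hc]
    have hw_le : ∀ x, w x ≤ 1 := fun x => by unfold w; split_ifs <;> omega
    have hw_sat : ∀ x, w x ≠ 0 → a x.1 = slotPolarity x.2 := fun x hx => by
      simp only [w, ne_eq, dite_eq_right_iff, ite_eq_right_iff, one_ne_zero, imp_false,
        not_forall, not_not] at hx
      obtain ⟨h, hx⟩ := hx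
      exact hx ▸ (hsel _ h).2
    refine ⟨w, fun c hc => ?_, fun i => ?_⟩
    · rw [sum_congr rfl fun x hx => hw_fiber c hc x (mem_filter.1 hx).2, sum_ite_eq]
      simp [(hsel c hc).1]
    · have hexcl s (hs : slotPolarity s = true) : w (i, s) = 0 ∨ w (i, 2) = 0 := by
        by_contra! h
        exact absurd (hs.symm.trans ((hw_sat (i, s) h.1).symm.trans (hw_sat (i, 2) h.2)))
          (by simp [slotPolarity])
      have := hexcl 0 rfl
      have := hexcl 1 rfl
      have := hw_le (i, 0)
      have := hw_le (i, 1)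
      have := hw_le (i, 2)
      omega
  · rintro ⟨w, hcover, hspent⟩
    refine ⟨fun i => decide (0 < w (i, 0) + w (i, 1)), fun c hc => ?_⟩
    obtain ⟨⟨i, s⟩, hx, hw⟩ := exists_ne_zero_of_sum_ne_zero (hcover c hc ▸ one_ne_zero)
    refine ⟨(i, s), (mem_filter.1 hx).2, ?_⟩
    have := hspent i
    change decide (0 < w (i, 0) + w (i, 1)) = slotPolarity s
    match s with
    | 0 => exact decide_eq_true (by omega)
    | 1 => exact decide_eq_true (by omega)
    | 2 => exact decide_eq_false (by omega)

section Certificate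

variable {n m : ℕ} {γ : ℕ} {j k l : ℕ → ℕ}

variable (m γ j k l) in
def IsLinearCombination (lam : Fin n → Fin 5 → ℕ) : Prop :=
  (∑ i, ∑ k, lam i k) ≤ 2 * n ∧
  (∑ i : Fin n, (lam i 0 * γ ^ j i + lam i 1 * γ ^ k i + lam i 2 * γ ^ l i))
    = (∑ c ∈ range m, γ ^ c) ∧
  (∑ i : Fin n, (lam i 0 + lam i 1 + 2 * lam i 2 + lam i 3) * γ ^ (i : ℕ))
    = (∑ i ∈ range n, 2 * γ ^ i) ∧
  (∑ i : Fin n, ((lam i 3 : ℤ) + (lam i 4 : ℤ))) = 2 * (n : ℤ) - (m : ℤ)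

theorem exists_isLinearCombination_of_slot_cover {w : Fin n × Fin 3 → ℕ}
    (he : ∀ x : Fin n × Fin 3, slotClause j k l x < m)
    (hcover : ∀ c < m, ∑ x with slotClause j k l x = c, w x = 1)
    (hspent : ∀ i, w (i, 0) + w (i, 1) + 2 * w (i, 2) ≤ 2) :
    ∃ lam : Fin n → Fin 5 → ℕ, IsLinearCombination m γ j k l lam := by
  -- `λ₄` pads the digit of each variable in (2) up to `2`, and `λ₅ = λ₃` then balances (3).
  let lam i : Fin 5 → ℕ :=
    ![w (i, 0), w (i, 1), w (i, 2), 2 - (w (i, 0) + w (i, 1) + 2 * w (i, 2)), w (i, 2)]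
  have hdigit i : lam i 0 + lam i 1 + 2 * lam i 2 + lam i 3 = 2 := by
    have := hspent i
    simp only [Fin.isValue, Matrix.cons_val_zero, Matrix.cons_val_one, Matrix.cons_val, lam]
    omega
  have hcount : ∑ x, w x = m := by
    rw [← sum_fiberwise_of_maps_to (t := range m) fun x _ => mem_range.2 (he x),
      sum_congr rfl fun c hc => hcover c (mem_range.1 hc)]
    simp
  refine ⟨lam, le_of_eq ?_, ?_, ?_, ?_⟩
  · calc ∑ i, ∑ k, lam i k = ∑ _i : Fin n, 2 :=
          sum_congr rfl fun i _ => by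
            rw [Fin.sum_univ_five, ← hdigit i]
            simp only [Fin.isValue, Matrix.cons_val_zero, Matrix.cons_val_one, Matrix.cons_val, lam]
            ring
      _ = 2 * n := by simp [mul_comm]
  · change ∑ i, (w (i, 0) * γ ^ j i + w (i, 1) * γ ^ k i + w (i, 2) * γ ^ l i) = _
    rw [← sum_slots_mul_pow, sum_mul_pow_eq_sum_range_fiber fun x _ => he x]
    exact sum_congr rfl fun c hc => by rw [hcover c (mem_range.1 hc), one_mul]
  · rw [sum_congr rfl fun i _ => by rw [hdigit i], Fin.sum_univ_eq_sum_range (fun i => 2 * γ ^ i)]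
  · have hpad i : (lam i 3 : ℤ) + lam i 4 = 2 - ((w (i, 0) + w (i, 1) + w (i, 2) : ℕ) : ℤ) := by
      have := hspent i
      simp only [Fin.isValue, Matrix.cons_val, Nat.cast_add, lam]
      omega
    rw [sum_congr rfl fun i _ => hpad i, sum_sub_distrib, ← Nat.cast_sum, ← hcount,
      Fintype.sum_prod_type]
    simp [Fin.sum_univ_three, mul_comm]

theorem exists_slot_cover_of_isLinearCombination (hn : 1 ≤ n) (hγ : 4 * n < γ)
    (he : ∀ x : Fin n × Fin 3, slotClause j k l x < m) {lam : Fin n → Fin 5 → ℕ}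
    (hlam : IsLinearCombination m γ j k l lam) :
    ∃ w : Fin n × Fin 3 → ℕ, (∀ c < m, ∑ x with slotClause j k l x = c, w x = 1) ∧
      ∀ i, w (i, 0) + w (i, 1) + 2 * w (i, 2) ≤ 2 := by
  obtain ⟨hsum, h1, h2, -⟩ := hlam
  have hvar i : ∑ k, lam i k ≤ 2 * n :=
    (single_le_sum (f := fun i => ∑ k, lam i k) (fun _ _ => Nat.zero_le _) (mem_univ i)).trans hsum
  have hdigit : ∀ i, lam i 0 + lam i 1 + 2 * lam i 2 + lam i 3 = 2 := by
    refine congrFun (Nat.eq_of_sum_mul_pow_eq (b := γ) (v := fun _ => 2)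
      (u := fun i => lam i 0 + lam i 1 + 2 * lam i 2 + lam i 3) (by omega)
      (fun i => ?_) (fun _ => by omega) ?_)
    · have := hvar i
      rw [Fin.sum_univ_five] at this
      omega
    · rw [h2, ← Fin.sum_univ_eq_sum_range (fun i => 2 * γ ^ i)]
  let w : Fin n × Fin 3 → ℕ := fun x => lam x.1 (Fin.castLE (by decide) x.2)
  have hw_total : ∑ x, w x ≤ 2 * n :=
    calc ∑ x, w x = ∑ i, (lam i 0 + lam i 1 + lam i 2) := by
          simp [w, Fintype.sum_prod_type, Fin.sum_univ_three]
      _ ≤ ∑ i, ∑ k, lam i k := sum_le_sum fun i _ => by rw [Fin.sum_univ_five]; omega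
      _ ≤ 2 * n := hsum
  have hcover := Nat.eq_of_sum_mul_pow_eq (b := γ) (v := fun _ => 1)
    (u := fun c : Fin m => ∑ x with slotClause j k l x = c, w x) (by omega)
    (fun c => ((sum_le_sum_of_subset (filter_subset _ _)).trans hw_total).trans_lt (by omega))
    (fun _ => by omega) (by
      rw [Fin.sum_univ_eq_sum_range (fun c => (∑ x with slotClause j k l x = c, w x) * γ ^ c),
        Fin.sum_univ_eq_sum_range (fun c => 1 * γ ^ c), ← sum_mul_pow_eq_sum_range_fiber
        fun x _ => he x, sum_slots_mul_pow]
      simp only [one_mul]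
      exact h1)
  refine ⟨w, fun c hc => congrFun hcover ⟨c, hc⟩, fun i => ?_⟩
  have := hdigit i
  change lam i 0 + lam i 1 + 2 * lam i 2 ≤ 2
  omega

end Certificate

theorem satisfiable_iff_linear_combination_general (n m γ : ℕ) (φ : Cnf3)
    (jIdx kIdx lIdx : ℕ → ℕ)
    (hn : 1 ≤ n) (hγ : 4 * n < γ)
    (hφn : φ.numVars = n) (hφm : φ.numClauses = m)
    (hidx : ∀ i < n, jIdx i < m ∧ kIdx i < m ∧ lIdx i < m)
    (hocc : ∀ i < n,
      (∀ c, φ.clauseOcc c i true =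
        (if jIdx i = c then 1 else 0) + (if kIdx i = c then 1 else 0)) ∧
      (∀ c, φ.clauseOcc c i false = (if lIdx i = c then 1 else 0))) :
    φ.Satisfiable ↔
      ∃ lam : Fin n → Fin 5 → ℕ,
        (∑ i, ∑ k, lam i k) ≤ 2 * n ∧
        (∑ i : Fin n,
            (lam i 0 * γ ^ jIdx (i : ℕ) + lam i 1 * γ ^ kIdx (i : ℕ)
              + lam i 2 * γ ^ lIdx (i : ℕ)))
          = (∑ j ∈ Finset.range m, γ ^ j) ∧
        (∑ i : Fin n,
            (lam i 0 + lam i 1 + 2 * lam i 2 + lam i 3) * γ ^ (i : ℕ))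
          = (∑ i ∈ Finset.range n, 2 * γ ^ i) ∧
        (∑ i : Fin n, ((lam i 3 : ℤ) + (lam i 4 : ℤ)))
          = 2 * (n : ℤ) - (m : ℤ) := by
  have he : ∀ x : Fin n × Fin 3, slotClause jIdx kIdx lIdx x < m := by
    rintro ⟨i, s⟩
    fin_cases s <;> simp [slotClause, hidx i i.2]
  rw [satisfiable_iff_exists_slot_assignment hφn hφm hocc,
    exists_slot_assignment_iff_exists_slot_cover]
  exact ⟨fun ⟨_, hcover, hspent⟩ => exists_isLinearCombination_of_slot_cover he hcover hspent,
    fun ⟨_, hlam⟩ => exists_slot_cover_of_isLinearCombination hn hγ he hlam⟩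

/-- A well-structured 3-CNF formula with `n ≥ 1` variables,
`m ≥ 1` clauses and an integer `γ > 4n` is satisfiable if and only if there are
nonnegative integer coefficients `λ_k^(i)` with total sum at most `2n` satisfying
the three linear-combination equations. -/
theorem satisfiable_iff_linear_combination (n m γ : ℕ) (φ : Cnf3)
    (jIdx kIdx lIdx : ℕ → ℕ)
    (hn : 1 ≤ n) (hm : 1 ≤ m) (hγ : 4 * n < γ)
    (hφn : φ.numVars = n) (hφm : φ.numClauses = m)
    (hws : φ.WellStructured)
    (hidx : ∀ i < n, jIdx i < m ∧ kIdx i < m ∧ lIdx i < m)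
    (hocc : ∀ i < n,
      (∀ c, φ.clauseOcc c i true =
        (if jIdx i = c then 1 else 0) + (if kIdx i = c then 1 else 0)) ∧
      (∀ c, φ.clauseOcc c i false = (if lIdx i = c then 1 else 0))) :
    φ.Satisfiable ↔
      ∃ lam : Fin n → Fin 5 → ℕ,
        (∑ i, ∑ k, lam i k) ≤ 2 * n ∧
        (∑ i : Fin n,
            (lam i 0 * γ ^ jIdx (i : ℕ) + lam i 1 * γ ^ kIdx (i : ℕ)
              + lam i 2 * γ ^ lIdx (i : ℕ)))
          = (∑ j ∈ Finset.range m, γ ^ j) ∧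
        (∑ i : Fin n,
            (lam i 0 + lam i 1 + 2 * lam i 2 + lam i 3) * γ ^ (i : ℕ))
          = (∑ i ∈ Finset.range n, 2 * γ ^ i) ∧
        (∑ i : Fin n, ((lam i 3 : ℤ) + (lam i 4 : ℤ)))
          = 2 * (n : ℤ) - (m : ℤ) :=
  satisfiable_iff_linear_combination_general n m γ φ jIdx kIdx lIdx hn hγ hφn hφm hidx hocc
end

section
/- Let n ≥ 1 and let γ be an integer with γ > 4n. Let λ_1^(i), λ_2^(i), λ_3^(i), λ_4^(i), λ_5^(i) be nonnegative integers for i ∈ {0,…,n−1} with Σ_{i=0}^{n−1} Σ_{k=1}^{5} λ_k^(i) ≤ 2n, and suppose Σ_{i=0}^{n−1} (λ_1^(i) + λ_2^(i) + 2·λ_3^(i) + λ_4^(i))·γ^i = Σ_{i=0}^{n−1} 2·γ^i. Then for every i ∈ {0,…,n−1} one has λ_1^(i) + λ_2^(i) + 2·λ_3^(i) + λ_4^(i) = 2; in particular, if λ_3^(i) ≥ 1 then λ_1^(i) = λ_2^(i) = 0 (a variable set to false cannot simultaneously be used positively). -/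
/-!
Each weighted sum `λ₁ + λ₂ + 2λ₃ + λ₄` is at most twice the total mass `2n`, hence below `γ`.
Both sides of the equation are therefore base-`γ` expansions with digits in `[0, γ)`, and
uniqueness of such expansions forces every weighted sum to equal `2`.
-/

theorem Nat.eq_of_sum_mul_pow_eq_s13 {b n : ℕ} (hb : 1 < b) {f g : Fin n → ℕ}
    (hf : ∀ i, f i < b) (hg : ∀ i, g i < b)
    (h : ∑ i, f i * b ^ (i : ℕ) = ∑ i, g i * b ^ (i : ℕ)) : f = g := by
  refine List.ofFn_injective <| Nat.ofDigits_inj_of_len_eq hb (by simp)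
    (by simpa using hf) (by simpa using hg) ?_
  simpa [Nat.ofDigits_eq_sum_mapIdx, List.mapIdx_eq_ofFn, List.sum_ofFn, mul_comm] using h

lemma weighted_sum_le_two_mul_sum (l : Fin 5 → ℕ) :
    l 0 + l 1 + 2 * l 2 + l 3 ≤ 2 * ∑ k, l k := by
  rw [Fin.sum_univ_five]
  omega

/-- Let `n ≥ 1` and `γ > 4n`. If nonnegative integers `λ_k^(i)`
(for `i < n`, `k ∈ {1,…,5}`) have total sum at most `2n` and satisfy
`Σ_i (λ_1^(i) + λ_2^(i) + 2λ_3^(i) + λ_4^(i))·γ^i = Σ_i 2·γ^i`, then for every `i`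
one has `λ_1^(i) + λ_2^(i) + 2λ_3^(i) + λ_4^(i) = 2`; in particular, if `λ_3^(i) ≥ 1`
then `λ_1^(i) = λ_2^(i) = 0`. -/
theorem consistent_assignment (n γ : ℕ) (hn : 1 ≤ n) (hγ : 4 * n < γ)
    (lam : Fin n → Fin 5 → ℕ)
    (hsum : (∑ i, ∑ k, lam i k) ≤ 2 * n)
    (heq : (∑ i : Fin n, (lam i 0 + lam i 1 + 2 * lam i 2 + lam i 3) * γ ^ (i : ℕ))
      = ∑ i : Fin n, 2 * γ ^ (i : ℕ)) :
    ∀ i : Fin n,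
      (lam i 0 + lam i 1 + 2 * lam i 2 + lam i 3 = 2) ∧
      (1 ≤ lam i 2 → lam i 0 = 0 ∧ lam i 1 = 0) := by
  have hdigit_lt : ∀ i, lam i 0 + lam i 1 + 2 * lam i 2 + lam i 3 < γ := fun i =>
    calc lam i 0 + lam i 1 + 2 * lam i 2 + lam i 3
        _ ≤ 2 * ∑ k, lam i k := weighted_sum_le_two_mul_sum (lam i)
        _ ≤ 2 * ∑ j, ∑ k, lam j k :=
          Nat.mul_le_mul_left 2 (Finset.single_le_sum (f := fun j => ∑ k, lam j k)
            (fun _ _ => Nat.zero_le _) (Finset.mem_univ i))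
        _ < γ := by omega
  have hdigits := Nat.eq_of_sum_mul_pow_eq_s13 (by omega) hdigit_lt (fun _ => by omega) heq
  intro i
  have hi := congrFun hdigits i
  exact ⟨hi, fun _ => by omega⟩
end
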